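/- Let G be a connected 2-dd and S a minimal split-set. Then no vertex of S is an internal saturated vertex of an alternating cycle (i.e., S is disjoint from the set of vertices that occur twice as intermediate vertices in a single alternating cycle). -/
import Mathlib


/-- In-degree of `v` in arc set `B`: number of arcs ending at `v`. -/
def inDeg {V : Type*} [DecidableEq V] (B : Finset (V × V)) (v : V) : ℕ :=
  (B.filter fun a => a.2 = v).card

/-- Out-degree of `v` in arc set `B`: number of arcs starting at `v`. -/
def outDeg {V : Type*} [DecidableEq V] (B : Finset (V × V)) (v : V) : ℕ :=
  (B.filter fun a => a.1 = v).card

/-- Vertices of the graph obtained from `(V, A)` by splitting the vertices of `S`: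
`(v, false)` is `v` itself (or `v^out` when `v ∈ S`), and `(v, true)` is `v^in`
for `v ∈ S`. -/
def splitVerts {V : Type*} [Fintype V] [DecidableEq V] (S : Finset V) :
    Finset (V × Bool) :=
  (Finset.univ.image fun v => (v, false)) ∪ (S.image fun v => (v, true))

/-- Arcs of the graph obtained from `(V, A)` by splitting the vertices of `S`:
an arc `(u, w)` ends at `w^in = (w, true)` if `w ∈ S`, else at `(w, false)`;
it starts at `(u, false)` (which is `u^out` when `u ∈ S`). -/
def splitArcs {V : Type*} [Fintype V] [DecidableEq V] (A : Finset (V × V)) (S : Finset V) :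
    Finset ((V × Bool) × (V × Bool)) :=
  A.image fun a => ((a.1, false), (a.2, if a.2 ∈ S then true else false))

/-- Reachability in the underlying undirected graph of the split graph. -/
def splitReach {V : Type*} [Fintype V] [DecidableEq V] (A : Finset (V × V)) (S : Finset V) :
    V × Bool → V × Bool → Prop :=
  Relation.ReflTransGen (fun x y => (x, y) ∈ splitArcs A S ∨ (y, x) ∈ splitArcs A S)

/-- The graph obtained by splitting `S` is connected (as an undirected graph). -/
def SplitConnected {V : Type*} [Fintype V] [DecidableEq V] (A : Finset (V × V))
    (S : Finset V) : Prop :=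
  ∀ x ∈ splitVerts (V := V) S, ∀ y ∈ splitVerts (V := V) S, splitReach A S x y

/-- Cyclic successor on `Fin n`. -/
def cyclicSucc {n : ℕ} (i : Fin n) : Fin n :=
  ⟨(i.1 + 1) % n, Nat.mod_lt _ (Nat.lt_of_le_of_lt (Nat.zero_le _) i.isLt)⟩

/-- An alternating cycle of the digraph with arc set `A`: a cyclic sequence of `2r`
distinct arcs, consecutive arcs sharing end-vertices at even positions and
start-vertices at odd positions. -/
structure AltCycle (V : Type*) (A : Finset (V × V)) where
  r : ℕ
  hr : 0 < r
  e : Fin (2 * r) → V × V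
  inj : Function.Injective e
  memA : ∀ i, e i ∈ A
  alt : ∀ i : Fin (2 * r),
    if Even i.1 then (e i).2 = (e (cyclicSucc i)).2 else (e i).1 = (e (cyclicSucc i)).1

/-- Forward arcs of an alternating cycle (even positions). -/
def AltCycle.fwd {V : Type*} [DecidableEq V] {A : Finset (V × V)} (X : AltCycle V A) :
    Finset (V × V) :=
  ((Finset.univ : Finset (Fin (2 * X.r))).filter fun i => Even i.1).image X.e

/-- Backward arcs of an alternating cycle (odd positions). -/
def AltCycle.bwd {V : Type*} [DecidableEq V] {A : Finset (V × V)} (X : AltCycle V A) :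
    Finset (V × V) :=
  ((Finset.univ : Finset (Fin (2 * X.r))).filter fun i => ¬ Even i.1).image X.e

/-- The arc set of an alternating cycle. -/
def AltCycle.arcs {V : Type*} [DecidableEq V] {A : Finset (V × V)} (X : AltCycle V A) :
    Finset (V × V) :=
  X.fwd ∪ X.bwd

section Aux
variable {V : Type*} [Fintype V] [DecidableEq V] {A : Finset (V × V)} {S : Finset V}

lemma splitReach_symm {x y : V × Bool} (h : splitReach A S x y) : splitReach A S y x := by
  induction h with
  | refl => exact .refl
  | tail _ hstep ih => exact Relation.ReflTransGen.head (Or.symm hstep) ih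

lemma arc_mem_splitArcs {a : V × V} (ha : a ∈ A) :
    ((a.1, false), (a.2, if a.2 ∈ S then true else false)) ∈ splitArcs A S :=
  Finset.mem_image_of_mem _ ha

lemma reach_ends {a : V × V} (ha : a ∈ A) :
    splitReach A S (a.1, false) (a.2, if a.2 ∈ S then true else false) :=
  Relation.ReflTransGen.single (Or.inl (arc_mem_splitArcs ha))

lemma step_l {X : AltCycle V A} (i : Fin (2 * X.r)) :
    splitReach A S ((X.e i).1, false) ((X.e (cyclicSucc i)).1, false) := by
  have halt := X.alt i
  by_cases he : Even i.1
  · rw [if_pos he] at halt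
    have h1 := reach_ends (A := A) (S := S) (X.memA i)
    have h2 := reach_ends (A := A) (S := S) (X.memA (cyclicSucc i))
    rw [halt] at h1
    exact h1.trans (splitReach_symm h2)
  · rw [if_neg he] at halt
    rw [halt]
    exact .refl

lemma cyclicSucc_iterate {n : ℕ} (h : 0 < n) (k : ℕ) :
    cyclicSucc^[k] (⟨0, h⟩ : Fin n) = ⟨k % n, Nat.mod_lt _ h⟩ := by
  induction k with
  | zero => simp
  | succ k ih =>
    rw [Function.iterate_succ_apply', ih]
    unfold cyclicSucc
    exact Fin.ext (by simp [Nat.mod_add_mod])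

lemma reach_iter {X : AltCycle V A} (k : ℕ) :
    splitReach A S ((X.e (⟨0, Nat.mul_pos two_pos X.hr⟩ : Fin (2 * X.r))).1, false)
      ((X.e (cyclicSucc^[k] ⟨0, Nat.mul_pos two_pos X.hr⟩)).1, false) := by
  induction k with
  | zero => exact .refl
  | succ k ih =>
    rw [Function.iterate_succ_apply']
    exact ih.trans (step_l _)

lemma reach_zero {X : AltCycle V A} (j : Fin (2 * X.r)) :
    splitReach A S ((X.e (⟨0, Nat.mul_pos two_pos X.hr⟩ : Fin (2 * X.r))).1, false)
      ((X.e j).1, false) := by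
  have h := reach_iter (A := A) (S := S) (X := X) j.1
  have hj : cyclicSucc^[j.1] (⟨0, Nat.mul_pos two_pos X.hr⟩ : Fin (2 * X.r)) = j := by
    rw [cyclicSucc_iterate]
    exact Fin.ext (Nat.mod_eq_of_lt j.isLt)
  rwa [hj] at h

lemma mem_arcs_index {X : AltCycle V A} {a : V × V} (ha : a ∈ X.arcs) :
    ∃ j, X.e j = a := by
  rcases Finset.mem_union.1 ha with h | h <;>
  · obtain ⟨j, -, hj⟩ := Finset.mem_image.1 h
    exact ⟨j, hj⟩

lemma reach_arcs {X : AltCycle V A} {a b : V × V} (ha : a ∈ X.arcs) (hb : b ∈ X.arcs) :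
    splitReach A S (a.1, false) (b.1, false) := by
  obtain ⟨ja, rfl⟩ := mem_arcs_index ha
  obtain ⟨jb, rfl⟩ := mem_arcs_index hb
  exact (splitReach_symm (reach_zero ja)).trans (reach_zero jb)

lemma reach_mono {v : V} (hv : v ∈ S)
    (hvv : splitReach A S (v, true) (v, false)) {x y : V × Bool}
    (h : splitReach A (S.erase v) x y) : splitReach A S x y := by
  have key : ∀ b c : V × Bool, (b, c) ∈ splitArcs A (S.erase v) → splitReach A S b c := by
    intro b c hbc
    obtain ⟨a, haA, heq⟩ := Finset.mem_image.1 hbc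
    obtain ⟨hb, hc⟩ := Prod.mk.injEq .. ▸ heq
    by_cases h2 : a.2 = v
    · have : a.2 ∉ S.erase v := by simp [h2]
      rw [if_neg this] at hc
      have h1 := reach_ends (A := A) (S := S) haA
      rw [if_pos (h2 ▸ hv), h2] at h1
      rw [← hb, ← hc, h2]
      exact h1.trans hvv
    · have : (if a.2 ∈ S.erase v then true else false) = (if a.2 ∈ S then true else false) := by
        simp [Finset.mem_erase, h2]
      rw [this] at hc
      rw [← hb, ← hc]
      exact reach_ends haA
  induction h with
  | refl => exact .refl
  | tail _ hstep ih =>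
    rcases hstep with h' | h'
    · exact ih.trans (key _ _ h')
    · exact ih.trans (splitReach_symm (key _ _ h'))

end Aux

theorem minimal_split_avoids_internal_vertices {V : Type*} [Fintype V] [DecidableEq V]
    (A : Finset (V × V))
    (hreg : ∀ v : V, inDeg A v = 2 ∧ outDeg A v = 2)
    (hconn : SplitConnected A (∅ : Finset V))
    (S : Finset V) (hsplit : ¬ SplitConnected A S)
    (hmin : ∀ T ⊂ S, SplitConnected A T)
    {ι : Type*} [Fintype ι] (X : ι → AltCycle V A)
    (hdec : ∀ a ∈ A, ∃! i : ι, a ∈ (X i).arcs) :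
    ∀ v ∈ S, ∀ i : ι, ¬ (∀ a ∈ A, (a.1 = v ∨ a.2 = v) → a ∈ (X i).arcs) := by
  intro v hv i H
  apply hsplit
  -- an arc into v
  obtain ⟨a, haA, ha2⟩ : ∃ a ∈ A, a.2 = v := by
    have h := (hreg v).1
    unfold inDeg at h
    have : (A.filter fun a => a.2 = v).Nonempty := by
      rw [← Finset.card_pos, h]; norm_num
    obtain ⟨a, ha⟩ := this
    exact ⟨a, (Finset.mem_filter.1 ha).1, (Finset.mem_filter.1 ha).2⟩
  obtain ⟨b, hbA, hb1⟩ : ∃ b ∈ A, b.1 = v := by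
    have h := (hreg v).2
    unfold outDeg at h
    have : (A.filter fun a => a.1 = v).Nonempty := by
      rw [← Finset.card_pos, h]; norm_num
    obtain ⟨b, hb⟩ := this
    exact ⟨b, (Finset.mem_filter.1 hb).1, (Finset.mem_filter.1 hb).2⟩
  have haX : a ∈ (X i).arcs := H a haA (Or.inr ha2)
  have hbX : b ∈ (X i).arcs := H b hbA (Or.inl hb1)
  -- (v, true) reaches (v, false) in the S-split graph
  have hvv : splitReach A S (v, true) (v, false) := by
    have h1 := reach_ends (A := A) (S := S) haA
    rw [ha2, if_pos hv] at h1
    have h2 : splitReach A S (a.1, false) (b.1, false) := reach_arcs haX hbX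
    rw [hb1] at h2
    exact (splitReach_symm h1).trans h2
  have hT := hmin (S.erase v) (Finset.erase_ssubset hv)
  intro x hx y hy
  -- project a vertex of the S-split graph to the (S \ {v})-split graph
  have proj : ∀ z ∈ splitVerts (V := V) S, ∃ z', z' ∈ splitVerts (V := V) (S.erase v) ∧
      splitReach A S z z' := by
    intro z hz
    by_cases hzv : z = (v, true)
    · exact ⟨(v, false), by simp [splitVerts], hzv ▸ hvv⟩
    · refine ⟨z, ?_, .refl⟩
      rcases Finset.mem_union.1 hz with h | h
      · obtain ⟨u, -, rfl⟩ := Finset.mem_image.1 h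
        exact Finset.mem_union_left _ (Finset.mem_image_of_mem _ (Finset.mem_univ u))
      · obtain ⟨u, hu, rfl⟩ := Finset.mem_image.1 h
        have huv : u ≠ v := fun h' => hzv (by rw [h'])
        exact Finset.mem_union_right _
          (Finset.mem_image_of_mem _ (Finset.mem_erase.2 ⟨huv, hu⟩))
  obtain ⟨x', hx', hxx⟩ := proj x hx
  obtain ⟨y', hy', hyy⟩ := proj y hy
  exact (hxx.trans (reach_mono hv hvv (hT x' hx' y' hy'))).trans (splitReach_symm hyy)
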